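/- Let A be a finite index set with design matrix X_A ∈ ℝ^{n×|A|}, α > 0, q, b ∈ ℝⁿ, λ ∈ ℝ, and s ∈ ℝ^{|A|}. Suppose β, β′ ∈ ℝ^{|A|} and τ_t, τ_{t+1} ∈ ℝ satisfy −X_Aᵀ((q + τ_t b) − X_A β) + α β + λ s = 0 and −X_Aᵀ((q + τ_{t+1} b) − X_A β′) + α β′ + λ s = 0 (same active set and same sign vector s). Then β′ − β = (X_Aᵀ X_A + α I_{|A|})⁻¹ X_Aᵀ b · (τ_{t+1} − τ_t); in particular the elastic-net solution along the τ-path is piecewise linear in τ with direction ν_A(τ) = (X_Aᵀ X_A + α I_{|A|})⁻¹ X_Aᵀ b. -/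

import Mathlib

open Matrix

section ElasticNet

variable {m n : Type*} [Fintype m] [Fintype n] [DecidableEq n]

/-- The gradient of `½‖y - Xβ‖² + (α/2)‖β‖²` plus `λ s`; its vanishing is the elastic-net KKT
condition on an active set with sign vector `s`. -/
def elasticNetKKT {R : Type*} [CommRing R] (X : Matrix m n R) (α lam : R) (s : n → R)
    (y : m → R) (β : n → R) : n → R :=
  -(Xᵀ *ᵥ (y - X *ᵥ β)) + α • β + lam • s

theorem elasticNetKKT_sub {R : Type*} [CommRing R] (X : Matrix m n R) (α lam : R)
    (s : n → R) (y y' : m → R) (β β' : n → R) :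
    elasticNetKKT X α lam s y' β' - elasticNetKKT X α lam s y β =
      (Xᵀ * X + α • 1) *ᵥ (β' - β) - Xᵀ *ᵥ (y' - y) := by
  simp only [elasticNetKKT, add_mulVec, smul_mulVec, one_mulVec, ← mulVec_mulVec, mulVec_sub]
  abel

theorem posDef_transpose_mul_self_add_smul_one (X : Matrix m n ℝ) {α : ℝ} (hα : 0 < α) :
    (Xᵀ * X + α • (1 : Matrix n n ℝ)).PosDef :=
  PosDef.posSemidef_add (posSemidef_conjTranspose_mul_self X) (PosDef.one.smul hα)

theorem sub_eq_of_elasticNetKKT_eq_zero (X : Matrix m n ℝ) {α : ℝ} (hα : 0 < α) (lam : ℝ)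
    (s : n → ℝ) {y y' : m → ℝ} {β β' : n → ℝ}
    (h : elasticNetKKT X α lam s y β = 0) (h' : elasticNetKKT X α lam s y' β' = 0) :
    β' - β = (Xᵀ * X + α • 1)⁻¹ *ᵥ (Xᵀ *ᵥ (y' - y)) := by
  have hstep : (Xᵀ * X + α • 1) *ᵥ (β' - β) = Xᵀ *ᵥ (y' - y) := by
    rw [← sub_eq_zero, ← elasticNetKKT_sub, h, h', sub_zero]
  let _ := (posDef_transpose_mul_self_add_smul_one X hα).isUnit.invertible
  exact (inv_mulVec_eq_vec hstep.symm).symm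

end ElasticNet

/-- In the elastic-net τ-path with parametrized response y(τ) = q + τ b, if the KKT
stationarity condition holds on the active set with the same sign vector at two
parameter values, the solution moves linearly in τ with direction
ν_A = (X_Aᵀ X_A + α I)⁻¹ X_Aᵀ b. -/
theorem elastic_net_tau_path_piecewise_linear
    (n a : ℕ) (X : Matrix (Fin n) (Fin a) ℝ) (α : ℝ) (hα : 0 < α)
    (q b : Fin n → ℝ) (lam : ℝ) (s : Fin a → ℝ)
    (β β' : Fin a → ℝ) (τt τt1 : ℝ)
    (h : -(Xᵀ.mulVec ((q + τt • b) - X.mulVec β)) + α • β + lam • s = 0)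
    (h' : -(Xᵀ.mulVec ((q + τt1 • b) - X.mulVec β')) + α • β' + lam • s = 0) :
    β' - β =
      (τt1 - τt) •
        ((Xᵀ * X + α • (1 : Matrix (Fin a) (Fin a) ℝ))⁻¹.mulVec (Xᵀ.mulVec b)) := by
  have hy : (q + τt1 • b) - (q + τt • b) = (τt1 - τt) • b := by module
  rw [sub_eq_of_elasticNetKKT_eq_zero X hα lam s h h', hy, mulVec_smul, mulVec_smul]
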